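/- arXiv:2310.06073 — 3 statements merged into one kernel-verified Lean document; each statement's English description precedes it below -/
import Mathlib

section
/- Let (A_i)_{i=1}^n and (B_i)_{i=1}^n be two sequences of d×d real matrices, and let p, q ∈ [1, ∞] satisfy 1/p + 1/q = 1. Then ‖Σ_{i=1}^n A_i B_i‖_{S^1} ≤ ‖(Σ_{i=1}^n A_i A_iᵀ)^{1/2}‖_{S^p} · ‖(Σ_{i=1}^n B_iᵀ B_i)^{1/2}‖_{S^q}. -/
/-!
Write `Σ AᵢBᵢ = CD` with the block row `C = [A₁ ⋯ Aₙ]` and the block column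
`D = [B₁; ⋯; Bₙ]`, so that `Σ AᵢAᵢᵀ = CCᵀ` and `Σ BᵢᵀBᵢ = DᵀD`. Take singular vectors
`CD yₖ = rₖ xₖ`, eigenvectors `uⱼ` of `CCᵀ` with `Cᵀuⱼ = sⱼvⱼ`, and eigenvectors `zₗ` of `DᵀD`
with `Dzₗ = tₗwₗ`. Expanding `rₖ = ⟨Cᵀxₖ, Dyₖ⟩` in these bases gives
`Σₖ rₖ = Σⱼₗ sⱼ tₗ ⟨vⱼ, wₗ⟩ γⱼₗ` with `γⱼₗ = Σₖ ⟨uⱼ, xₖ⟩⟨zₗ, yₖ⟩`, and Bessel's inequality makes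
`Mⱼₗ = |⟨vⱼ, wₗ⟩| |γⱼₗ|` doubly substochastic. Hölder's inequality bounds `Σⱼₗ sⱼ tₗ Mⱼₗ` by
`‖s‖_p ‖t‖_q` for every such `M`.
-/

open Matrix ENNReal

/-- The spectral norm (largest singular value / `ℓ²` operator norm) of a real square matrix. -/
noncomputable def specNorm {d : ℕ} (A : Matrix (Fin d) (Fin d) ℝ) : ℝ :=
  ‖(Matrix.toEuclideanCLM (𝕜 := ℝ) A : EuclideanSpace ℝ (Fin d) →L[ℝ] EuclideanSpace ℝ (Fin d))‖

/-- The singular values of a real square matrix (in some order), i.e. the square roots of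
the eigenvalues of `Aᵀ A`. -/
noncomputable def singVals {d : ℕ} (A : Matrix (Fin d) (Fin d) ℝ) (j : Fin d) : ℝ :=
  Real.sqrt ((Matrix.isHermitian_conjTranspose_mul_self A).eigenvalues j)

/-- The Schatten `p`-norm of a real square matrix, `p ∈ [1,∞]`:
`(Σ_j 𝔰_j(A)^p)^{1/p}` for finite `p`, and the spectral norm for `p = ∞`. -/
noncomputable def schattenNorm {d : ℕ} (p : ℝ≥0∞) (A : Matrix (Fin d) (Fin d) ℝ) : ℝ :=
  if p = ∞ then specNorm A else (∑ j, singVals A j ^ p.toReal) ^ (1 / p.toReal)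

/-- The positive semidefinite square root of a matrix (junk value `0` if the matrix is
not positive semidefinite). -/
noncomputable def psdSqrt {d : ℕ} (M : Matrix (Fin d) (Fin d) ℝ) : Matrix (Fin d) (Fin d) ℝ := by
  classical exact if h : M.PosSemidef then
    h.1.eigenvectorUnitary.1 * diagonal (RCLike.ofReal ∘ Real.sqrt ∘ h.1.eigenvalues) *
      (star h.1.eigenvectorUnitary : Matrix (Fin d) (Fin d) ℝ) else 0

section Orthonormal

variable {ι κ : Type*} [Fintype ι]

def IsOrthonormal (u : κ → ι → ℝ) : Prop :=
  (∀ k, u k ⬝ᵥ u k = 1) ∧ Pairwise fun k k' => u k ⬝ᵥ u k' = 0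

def IsSubOrthonormal (v : κ → ι → ℝ) : Prop :=
  (∀ k, v k ⬝ᵥ v k ≤ 1) ∧ Pairwise fun k k' => v k ⬝ᵥ v k' = 0

lemma IsOrthonormal.isSubOrthonormal {u : κ → ι → ℝ} (hu : IsOrthonormal u) :
    IsSubOrthonormal u :=
  ⟨fun k => (hu.1 k).le, hu.2⟩

variable [Fintype κ] {v : κ → ι → ℝ}

lemma IsSubOrthonormal.dotProduct_self_sum_smul_le (hv : IsSubOrthonormal v) (c : κ → ℝ) :
    (∑ k, c k • v k) ⬝ᵥ (∑ k, c k • v k) ≤ ∑ k, c k ^ 2 := by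
  simp only [sum_dotProduct, dotProduct_sum, smul_dotProduct, dotProduct_smul, smul_eq_mul]
  refine Finset.sum_le_sum fun k _ => ?_
  rw [Finset.sum_eq_single k (fun k' _ h => by simp [hv.2 h]) (by simp)]
  nlinarith [hv.1 k, sq_nonneg (c k)]

lemma IsSubOrthonormal.sum_sq_dotProduct_le (hv : IsSubOrthonormal v) (w : ι → ℝ) :
    ∑ k, (v k ⬝ᵥ w) ^ 2 ≤ w ⬝ᵥ w := by
  set P := ∑ k, (v k ⬝ᵥ w) • v k
  have hPw : P ⬝ᵥ w = ∑ k, (v k ⬝ᵥ w) ^ 2 := by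
    simp only [P, sum_dotProduct, smul_dotProduct, smul_eq_mul, sq]
  have hPP := hv.dotProduct_self_sum_smul_le fun k => v k ⬝ᵥ w
  have h0 : 0 ≤ (w - P) ⬝ᵥ (w - P) := Finset.sum_nonneg fun i _ => mul_self_nonneg _
  rw [sub_dotProduct, dotProduct_sub, dotProduct_sub, dotProduct_comm w P] at h0
  linarith

end Orthonormal

lemma sum_abs_mul_abs_le_one {κ : Type*} [Fintype κ] {f g : κ → ℝ}
    (hf : ∑ k, f k ^ 2 ≤ 1) (hg : ∑ k, g k ^ 2 ≤ 1) : ∑ k, |f k| * |g k| ≤ 1 := by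
  have amgm : ∀ k, |f k| * |g k| ≤ (f k ^ 2 + g k ^ 2) / 2 := fun k => by
    nlinarith [sq_nonneg (|f k| - |g k|), sq_abs (f k), sq_abs (g k)]
  calc ∑ k, |f k| * |g k| ≤ ∑ k, (f k ^ 2 + g k ^ 2) / 2 := Finset.sum_le_sum fun k _ => amgm k
    _ = (∑ k, f k ^ 2 + ∑ k, g k ^ 2) / 2 := by rw [← Finset.sum_div, Finset.sum_add_distrib]
    _ ≤ 1 := by linarith

section Spectral

variable {ι m : Type*} [Fintype ι] [Fintype m]

lemma conjTranspose_mulVec_dotProduct (M : Matrix ι m ℝ) (a : ι → ℝ) (b : m → ℝ) :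
    (Mᴴ *ᵥ a) ⬝ᵥ b = a ⬝ᵥ M *ᵥ b := by
  rw [conjTranspose_eq_transpose_of_trivial, dotProduct_comm, dotProduct_transpose_mulVec]

lemma mulVec_dotProduct_mulVec_of_mulVec_eq_smul (E : Matrix ι m ℝ) {a : m → ℝ}
    {μ : ℝ} (ha : (Eᴴ * E) *ᵥ a = μ • a) (b : m → ℝ) :
    (E *ᵥ a) ⬝ᵥ (E *ᵥ b) = μ * (a ⬝ᵥ b) := by
  rw [← conjTranspose_mulVec_dotProduct, mulVec_mulVec, ha, smul_dotProduct, smul_eq_mul]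

/-- The vectors `vₖ = sₖ⁻¹ E uₖ`; when `sₖ = 0` both `vₖ` and `E uₖ` vanish. -/
lemma exists_isSubOrthonormal_mulVec_eq_smul (E : Matrix ι m ℝ) {u : m → m → ℝ}
    (hu : IsOrthonormal u) {s : m → ℝ} (hEu : ∀ k, (Eᴴ * E) *ᵥ u k = s k ^ 2 • u k) :
    ∃ v : m → ι → ℝ, IsSubOrthonormal v ∧ (∀ k, s k ≠ 0 → v k ⬝ᵥ v k = 1) ∧
      ∀ k, E *ᵥ u k = s k • v k := by
  have hE k k' := mulVec_dotProduct_mulVec_of_mulVec_eq_smul E (hEu k) (u k')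
  have hnorm : ∀ k, s k ≠ 0 → ((s k)⁻¹ • (E *ᵥ u k)) ⬝ᵥ ((s k)⁻¹ • (E *ᵥ u k)) = 1 := by
    intro k hk
    rw [smul_dotProduct, dotProduct_smul, hE, hu.1 k, smul_eq_mul, smul_eq_mul]
    field_simp
  refine ⟨fun k => (s k)⁻¹ • (E *ᵥ u k), ⟨fun k => ?_, fun k k' hkk' => ?_⟩, hnorm, fun k => ?_⟩
  · by_cases hk : s k = 0
    · simp [hk]
    · exact (hnorm k hk).le
  · simp only [smul_dotProduct, dotProduct_smul, hE, hu.2 hkk', mul_zero, smul_zero]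
  · by_cases hk : s k = 0
    · have : E *ᵥ u k = 0 := by rw [← dotProduct_self_eq_zero, hE, hk]; ring
      simp [hk, this]
    · rw [smul_smul, mul_inv_cancel₀ hk, one_smul]

lemma Matrix.IsHermitian.exists_isOrthonormal_eigenvectors [DecidableEq m] {H : Matrix m m ℝ}
    (hH : H.IsHermitian) :
    ∃ u : m → m → ℝ, IsOrthonormal u ∧ (∀ a c : m → ℝ, ∑ k, (a ⬝ᵥ u k) * (u k ⬝ᵥ c) = a ⬝ᵥ c) ∧
      ∀ k, H *ᵥ u k = hH.eigenvalues k • u k := by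
  set b := hH.eigenvectorBasis
  have inner_eq (x y : EuclideanSpace ℝ m) : inner ℝ x y = x.ofLp ⬝ᵥ y.ofLp := by
    rw [EuclideanSpace.inner_eq_star_dotProduct, star_trivial, dotProduct_comm]
  refine ⟨fun k => b k, ⟨fun k => ?_, fun k k' h => ?_⟩, fun a c => ?_,
    hH.mulVec_eigenvectorBasis⟩
  · rw [← inner_eq, real_inner_self_eq_norm_sq, b.orthonormal.1 k, one_pow]
  · exact (inner_eq _ _).symm.trans (b.orthonormal.2 h)
  · simpa only [inner_eq] using b.sum_inner_mul_inner (WithLp.toLp 2 a) (WithLp.toLp 2 c)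

end Spectral

lemma exists_isOrthonormal_eigenvectors_conjTranspose_mul_self {d : ℕ}
    (M : Matrix (Fin d) (Fin d) ℝ) :
    ∃ u : Fin d → Fin d → ℝ, IsOrthonormal u ∧
      (∀ a c : Fin d → ℝ, ∑ k, (a ⬝ᵥ u k) * (u k ⬝ᵥ c) = a ⬝ᵥ c) ∧
      ∀ k, (Mᴴ * M) *ᵥ u k = singVals M k ^ 2 • u k := by
  obtain ⟨u, hu, hpar, heig⟩ :=
    (isHermitian_conjTranspose_mul_self M).exists_isOrthonormal_eigenvectors
  refine ⟨u, hu, hpar, fun k => ?_⟩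
  rw [heig, singVals, Real.sq_sqrt ((posSemidef_conjTranspose_mul_self M).eigenvalues_nonneg k)]

lemma conjTranspose_psdSqrt_mul_psdSqrt {d : ℕ} {H : Matrix (Fin d) (Fin d) ℝ}
    (hH : H.PosSemidef) : (psdSqrt H)ᴴ * psdSqrt H = H := by
  set U : Matrix (Fin d) (Fin d) ℝ := (hH.1.eigenvectorUnitary : Matrix (Fin d) (Fin d) ℝ)
  set D : Matrix (Fin d) (Fin d) ℝ := diagonal (RCLike.ofReal ∘ Real.sqrt ∘ hH.1.eigenvalues)
  have hsqrt : psdSqrt H = U * D * star U := dif_pos hH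
  have hD : Dᴴ * D = diagonal (RCLike.ofReal ∘ hH.1.eigenvalues) := by
    simp [D, diagonal_mul_diagonal, Real.mul_self_sqrt (hH.eigenvalues_nonneg _)]
  have hUU : star U * U = 1 := Unitary.coe_star_mul_self _
  conv_rhs => rw [hH.1.spectral_theorem, Unitary.conjStarAlgAut_apply]
  rw [hsqrt, star_eq_conjTranspose, conjTranspose_mul, conjTranspose_mul,
    conjTranspose_conjTranspose, ← hD, ← star_eq_conjTranspose U]
  simp only [Matrix.mul_assoc]
  rw [← Matrix.mul_assoc (star U) U, hUU, Matrix.one_mul]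

lemma exists_isOrthonormal_eigenvectors_psdSqrt {d : ℕ} {H : Matrix (Fin d) (Fin d) ℝ}
    (hH : H.PosSemidef) :
    ∃ u : Fin d → Fin d → ℝ, IsOrthonormal u ∧
      (∀ a c : Fin d → ℝ, ∑ k, (a ⬝ᵥ u k) * (u k ⬝ᵥ c) = a ⬝ᵥ c) ∧
      ∀ k, H *ᵥ u k = singVals (psdSqrt H) k ^ 2 • u k := by
  simpa only [conjTranspose_psdSqrt_mul_psdSqrt hH] using
    exists_isOrthonormal_eigenvectors_conjTranspose_mul_self (psdSqrt H)

open scoped Matrix.Norms.L2Operator in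
lemma singVals_le_specNorm {d : ℕ} (M : Matrix (Fin d) (Fin d) ℝ) (j : Fin d) :
    singVals M j ≤ specNorm M := by
  set hM := isHermitian_conjTranspose_mul_self M
  have heig : hM.eigenvalues j ≤ ‖M‖ ^ 2 := by
    have hmul := l2_opNorm_mulVec (Mᴴ * M) (hM.eigenvectorBasis j)
    rw [hM.mulVec_eigenvectorBasis j] at hmul
    calc hM.eigenvalues j ≤ |hM.eigenvalues j| := le_abs_self _
      _ ≤ ‖Mᴴ * M‖ := by simpa [norm_smul] using hmul
      _ = ‖M‖ ^ 2 := by rw [l2_opNorm_conjTranspose_mul_self, sq]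
  exact Real.sqrt_le_iff.mpr ⟨norm_nonneg _, heig⟩

lemma dotProduct_mul_mulVec_eq_sum_sum {ι m J L : Type*} [Fintype ι] [Fintype m] [Fintype J]
    [Fintype L] {C : Matrix m ι ℝ} {D : Matrix ι m ℝ} {u : J → m → ℝ} {v : J → ι → ℝ}
    {s : J → ℝ} {z : L → m → ℝ} {w : L → ι → ℝ} {t : L → ℝ}
    (hu : ∀ a c : m → ℝ, ∑ j, (a ⬝ᵥ u j) * (u j ⬝ᵥ c) = a ⬝ᵥ c)
    (hCu : ∀ j, Cᴴ *ᵥ u j = s j • v j)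
    (hz : ∀ a c : m → ℝ, ∑ l, (a ⬝ᵥ z l) * (z l ⬝ᵥ c) = a ⬝ᵥ c)
    (hDz : ∀ l, D *ᵥ z l = t l • w l) (a b : m → ℝ) :
    a ⬝ᵥ (C * D) *ᵥ b = ∑ j, ∑ l, s j * t l * (v j ⬝ᵥ w l) * ((u j ⬝ᵥ a) * (z l ⬝ᵥ b)) := by
  have hvD : ∀ j, v j ⬝ᵥ D *ᵥ b = ∑ l, t l * (v j ⬝ᵥ w l) * (z l ⬝ᵥ b) := fun j => by
    rw [← conjTranspose_mulVec_dotProduct, ← hz]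
    refine Finset.sum_congr rfl fun l _ => ?_
    rw [conjTranspose_mulVec_dotProduct, hDz, dotProduct_smul, smul_eq_mul]
  rw [← hu a, ← mulVec_mulVec]
  refine Finset.sum_congr rfl fun j _ => ?_
  rw [← conjTranspose_mulVec_dotProduct, hCu, smul_dotProduct, hvD, smul_eq_mul, Finset.mul_sum,
    Finset.mul_sum, dotProduct_comm a]
  exact Finset.sum_congr rfl fun l _ => by ring

def IsDoublySubstochastic {J L : Type*} [Fintype J] [Fintype L] (M : Matrix J L ℝ) : Prop :=
  (∀ j l, 0 ≤ M j l) ∧ (∀ j, ∑ l, M j l ≤ 1) ∧ ∀ l, ∑ j, M j l ≤ 1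

namespace IsDoublySubstochastic

variable {J L : Type*} [Fintype J] [Fintype L] {M : Matrix J L ℝ} {s : J → ℝ} {t : L → ℝ}

lemma transpose (hM : IsDoublySubstochastic M) : IsDoublySubstochastic Mᵀ :=
  ⟨fun l j => hM.1 j l, hM.2.2, hM.2.1⟩

lemma sum_sum_mul_le_mul_sum (hM : IsDoublySubstochastic M) {N : ℝ} (hsN : ∀ j, s j ≤ N)
    (hN : 0 ≤ N) (ht : ∀ l, 0 ≤ t l) : ∑ j, ∑ l, s j * t l * M j l ≤ N * ∑ l, t l := by
  calc ∑ j, ∑ l, s j * t l * M j l ≤ ∑ j, ∑ l, N * t l * M j l := by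
        gcongr with j _ l _
        · exact hM.1 j l
        · exact ht l
        · exact hsN j
    _ = ∑ l, N * t l * ∑ j, M j l := by
        rw [Finset.sum_comm]
        simp only [Finset.mul_sum]
    _ ≤ ∑ l, N * t l * 1 := by
        gcongr with l
        · exact mul_nonneg hN (ht l)
        · exact hM.2.2 l
    _ = N * ∑ l, t l := by simp only [mul_one, Finset.mul_sum]

lemma sum_sum_mul_le_sum_mul (hM : IsDoublySubstochastic M) {N : ℝ} (hs : ∀ j, 0 ≤ s j)
    (htN : ∀ l, t l ≤ N) (hN : 0 ≤ N) : ∑ j, ∑ l, s j * t l * M j l ≤ (∑ j, s j) * N := by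
  rw [Finset.sum_comm, mul_comm]
  simpa only [mul_comm (s _), transpose_apply] using hM.transpose.sum_sum_mul_le_mul_sum htN hN hs

lemma sum_sum_rpow_le (hM : IsDoublySubstochastic M) (hs : ∀ j, 0 ≤ s j) {p : ℝ} (hp : 0 < p) :
    ∑ j, ∑ l, (s j * M j l ^ (1 / p)) ^ p ≤ ∑ j, s j ^ p := by
  refine Finset.sum_le_sum fun j _ => ?_
  calc ∑ l, (s j * M j l ^ (1 / p)) ^ p = s j ^ p * ∑ l, M j l := by
        rw [Finset.mul_sum]
        refine Finset.sum_congr rfl fun l _ => ?_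
        rw [Real.mul_rpow (hs j) (Real.rpow_nonneg (hM.1 j l) _), ← Real.rpow_mul (hM.1 j l),
          one_div_mul_cancel hp.ne', Real.rpow_one]
    _ ≤ s j ^ p := mul_le_of_le_one_right (Real.rpow_nonneg (hs j) _) (hM.2.1 j)

/-- Hölder's inequality on `J × L`, splitting `Mⱼₗ = Mⱼₗ^{1/p} Mⱼₗ^{1/q}`. -/
lemma sum_sum_mul_le_Lp_mul_Lq (hM : IsDoublySubstochastic M) (hs : ∀ j, 0 ≤ s j)
    (ht : ∀ l, 0 ≤ t l) {p q : ℝ} (hpq : p.HolderConjugate q) :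
    ∑ j, ∑ l, s j * t l * M j l ≤ (∑ j, s j ^ p) ^ (1 / p) * (∑ l, t l ^ q) ^ (1 / q) := by
  set f : J × L → ℝ := fun jl => s jl.1 * M jl.1 jl.2 ^ (1 / p)
  set g : J × L → ℝ := fun jl => t jl.2 * M jl.1 jl.2 ^ (1 / q)
  have hf jl : 0 ≤ f jl := mul_nonneg (hs _) (Real.rpow_nonneg (hM.1 _ _) _)
  have hg jl : 0 ≤ g jl := mul_nonneg (ht _) (Real.rpow_nonneg (hM.1 _ _) _)
  have hpq1 : 1 / p + 1 / q = 1 := by rw [one_div, one_div, hpq.inv_add_inv_eq_one]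
  have hfg : ∀ j l, s j * t l * M j l = f (j, l) * g (j, l) := fun j l => by
    rw [mul_mul_mul_comm (s j), ← Real.rpow_add' (hM.1 j l) (by rw [hpq1]; exact one_ne_zero),
      hpq1, Real.rpow_one]
  calc ∑ j, ∑ l, s j * t l * M j l = ∑ jl, f jl * g jl := by
        rw [Fintype.sum_prod_type]
        simp only [hfg]
    _ ≤ (∑ jl, f jl ^ p) ^ (1 / p) * (∑ jl, g jl ^ q) ^ (1 / q) :=
        Real.inner_le_Lp_mul_Lq_of_nonneg Finset.univ hpq (fun jl _ => hf jl) fun jl _ => hg jl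
    _ ≤ (∑ j, s j ^ p) ^ (1 / p) * (∑ l, t l ^ q) ^ (1 / q) := by
        have hF : ∑ jl, f jl ^ p ≤ ∑ j, s j ^ p := by
          rw [Fintype.sum_prod_type]
          exact hM.sum_sum_rpow_le hs hpq.pos
        have hG : ∑ jl, g jl ^ q ≤ ∑ l, t l ^ q := by
          rw [Fintype.sum_prod_type_right]
          exact hM.transpose.sum_sum_rpow_le ht hpq.symm.pos
        have hF0 : 0 ≤ ∑ jl, f jl ^ p := Finset.sum_nonneg fun jl _ => Real.rpow_nonneg (hf jl) p
        have hG0 : 0 ≤ ∑ jl, g jl ^ q := Finset.sum_nonneg fun jl _ => Real.rpow_nonneg (hg jl) q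
        exact mul_le_mul (Real.rpow_le_rpow hF0 hF hpq.one_div_nonneg)
          (Real.rpow_le_rpow hG0 hG hpq.symm.one_div_nonneg) (Real.rpow_nonneg hG0 _)
          (Real.rpow_nonneg (hF0.trans hF) _)

end IsDoublySubstochastic

lemma sum_abs_dotProduct_mul_abs_sum_le_one {ι m m' J K L : Type*} [Fintype ι] [Fintype m]
    [Fintype m'] [Fintype K] [Fintype L] {v : J → ι → ℝ} {w : L → ι → ℝ} {u : J → m → ℝ}
    {x : K → m → ℝ} {z : L → m' → ℝ} {y : K → m' → ℝ} (hv : ∀ j, v j ⬝ᵥ v j ≤ 1)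
    (hw : IsSubOrthonormal w) (hu : ∀ j, u j ⬝ᵥ u j ≤ 1) (hx : IsSubOrthonormal x)
    (hz : IsSubOrthonormal z) (hy : IsSubOrthonormal y) (j : J) :
    ∑ l, |v j ⬝ᵥ w l| * |∑ k, (u j ⬝ᵥ x k) * (z l ⬝ᵥ y k)| ≤ 1 := by
  set Y := ∑ k, (u j ⬝ᵥ x k) • y k
  have hY : ∀ l, ∑ k, (u j ⬝ᵥ x k) * (z l ⬝ᵥ y k) = z l ⬝ᵥ Y := fun l => by
    simp only [Y, dotProduct_sum, dotProduct_smul, smul_eq_mul]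
  refine sum_abs_mul_abs_le_one ?_ ?_
  · calc ∑ l, (v j ⬝ᵥ w l) ^ 2 = ∑ l, (w l ⬝ᵥ v j) ^ 2 := by simp only [dotProduct_comm]
      _ ≤ 1 := (hw.sum_sq_dotProduct_le (v j)).trans (hv j)
  · calc ∑ l, (∑ k, (u j ⬝ᵥ x k) * (z l ⬝ᵥ y k)) ^ 2 = ∑ l, (z l ⬝ᵥ Y) ^ 2 := by simp only [hY]
      _ ≤ Y ⬝ᵥ Y := hz.sum_sq_dotProduct_le Y
      _ ≤ ∑ k, (u j ⬝ᵥ x k) ^ 2 := hy.dotProduct_self_sum_smul_le _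
      _ = ∑ k, (x k ⬝ᵥ u j) ^ 2 := by simp only [dotProduct_comm]
      _ ≤ 1 := (hx.sum_sq_dotProduct_le (u j)).trans (hu j)

lemma isDoublySubstochastic_abs_dotProduct_mul_abs_sum {ι m m' J K L : Type*} [Fintype ι]
    [Fintype m] [Fintype m'] [Fintype J] [Fintype K] [Fintype L] {v : J → ι → ℝ}
    {w : L → ι → ℝ} {u : J → m → ℝ} {x : K → m → ℝ} {z : L → m' → ℝ} {y : K → m' → ℝ}
    (hv : IsSubOrthonormal v) (hw : IsSubOrthonormal w) (hu : IsSubOrthonormal u)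
    (hx : IsSubOrthonormal x) (hz : IsSubOrthonormal z) (hy : IsSubOrthonormal y) :
    IsDoublySubstochastic (of fun j l => |v j ⬝ᵥ w l| * |∑ k, (u j ⬝ᵥ x k) * (z l ⬝ᵥ y k)|) := by
  refine ⟨fun j l => mul_nonneg (abs_nonneg _) (abs_nonneg _), fun j => ?_, fun l => ?_⟩
  · exact sum_abs_dotProduct_mul_abs_sum_le_one hv.1 hw hu.1 hx hz hy j
  · refine le_of_eq_of_le (Finset.sum_congr rfl fun j _ => ?_)
      (sum_abs_dotProduct_mul_abs_sum_le_one hw.1 hv hz.1 hy hu hx l)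
    simp only [of_apply, dotProduct_comm (v j), mul_comm (u j ⬝ᵥ _)]

lemma schattenNorm_one_eq_sum_singVals {d : ℕ} (X : Matrix (Fin d) (Fin d) ℝ) :
    schattenNorm 1 X = ∑ k, singVals X k := by
  simp [schattenNorm]

lemma schattenNorm_top {d : ℕ} (X : Matrix (Fin d) (Fin d) ℝ) : schattenNorm ∞ X = specNorm X :=
  if_pos rfl

lemma IsDoublySubstochastic.sum_sum_singVals_mul_le_schattenNorm_mul {d : ℕ}
    {M : Matrix (Fin d) (Fin d) ℝ} (hM : IsDoublySubstochastic M) (S T : Matrix (Fin d) (Fin d) ℝ)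
    (p q : ℝ≥0∞) [p.HolderConjugate q] :
    ∑ j, ∑ l, singVals S j * singVals T l * M j l ≤ schattenNorm p S * schattenNorm q T := by
  have hS j : 0 ≤ singVals S j := Real.sqrt_nonneg _
  have hT l : 0 ≤ singVals T l := Real.sqrt_nonneg _
  by_cases hp : p = ∞
  · obtain rfl : q = 1 := (ENNReal.HolderConjugate.eq_top_iff_eq_one p q).1 hp
    rw [hp, schattenNorm_top, schattenNorm_one_eq_sum_singVals]
    exact hM.sum_sum_mul_le_mul_sum (singVals_le_specNorm S) (norm_nonneg _) hT
  by_cases hq : q = ∞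
  · obtain rfl : p = 1 := (ENNReal.HolderConjugate.eq_top_iff_eq_one q p).1 hq
    rw [hq, schattenNorm_top, schattenNorm_one_eq_sum_singVals]
    exact hM.sum_sum_mul_le_sum_mul hS (singVals_le_specNorm T) (norm_nonneg _)
  rw [schattenNorm, schattenNorm, if_neg hp, if_neg hq]
  exact hM.sum_sum_mul_le_Lp_mul_Lq hS hT (ENNReal.HolderConjugate.toReal_of_ne_top hp hq)

lemma exists_isDoublySubstochastic_sum_singVals_mul_le {d : ℕ} {ι : Type*} [Fintype ι]
    (C : Matrix (Fin d) ι ℝ) (D : Matrix ι (Fin d) ℝ) :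
    ∃ M : Matrix (Fin d) (Fin d) ℝ, IsDoublySubstochastic M ∧ ∑ k, singVals (C * D) k ≤
      ∑ j, ∑ l, singVals (psdSqrt (C * Cᴴ)) j * singVals (psdSqrt (Dᴴ * D)) l * M j l := by
  obtain ⟨y, hy, -, hXy⟩ := exists_isOrthonormal_eigenvectors_conjTranspose_mul_self (C * D)
  obtain ⟨x, hx, hx1, hyx⟩ := exists_isSubOrthonormal_mulVec_eq_smul (C * D) hy hXy
  obtain ⟨u, hu, hu_par, hCCu⟩ :=
    exists_isOrthonormal_eigenvectors_psdSqrt (posSemidef_self_mul_conjTranspose C)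
  obtain ⟨v, hv, -, hCu⟩ := exists_isSubOrthonormal_mulVec_eq_smul Cᴴ hu
    (by simpa only [conjTranspose_conjTranspose] using hCCu)
  obtain ⟨z, hz, hz_par, hDDz⟩ :=
    exists_isOrthonormal_eigenvectors_psdSqrt (posSemidef_conjTranspose_mul_self D)
  obtain ⟨w, hw, -, hDz⟩ := exists_isSubOrthonormal_mulVec_eq_smul D hz hDDz
  set γ : Fin d → Fin d → ℝ := fun j l => ∑ k, (u j ⬝ᵥ x k) * (z l ⬝ᵥ y k)
  have hr k : singVals (C * D) k = x k ⬝ᵥ (C * D) *ᵥ y k := by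
    rw [hyx, dotProduct_smul, smul_eq_mul]
    by_cases hk : singVals (C * D) k = 0
    · rw [hk, zero_mul]
    · rw [hx1 k hk, mul_one]
  refine ⟨_, isDoublySubstochastic_abs_dotProduct_mul_abs_sum hv hw hu.isSubOrthonormal hx
    hz.isSubOrthonormal hy.isSubOrthonormal, ?_⟩
  calc ∑ k, singVals (C * D) k
      = ∑ k, ∑ j, ∑ l, singVals (psdSqrt (C * Cᴴ)) j * singVals (psdSqrt (Dᴴ * D)) l *
          (v j ⬝ᵥ w l) * ((u j ⬝ᵥ x k) * (z l ⬝ᵥ y k)) := by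
        simp only [hr, dotProduct_mul_mulVec_eq_sum_sum hu_par hCu hz_par hDz]
    _ = ∑ j, ∑ l, singVals (psdSqrt (C * Cᴴ)) j * singVals (psdSqrt (Dᴴ * D)) l *
          (v j ⬝ᵥ w l) * γ j l := by
        rw [Finset.sum_comm]
        refine Finset.sum_congr rfl fun j _ => ?_
        rw [Finset.sum_comm]
        simp only [γ, Finset.mul_sum]
    _ ≤ _ := by
        refine Finset.sum_le_sum fun j _ => Finset.sum_le_sum fun l _ => ?_
        rw [mul_assoc]
        exact mul_le_mul_of_nonneg_left ((le_abs_self _).trans (abs_mul _ _).le)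
          (mul_nonneg (Real.sqrt_nonneg _) (Real.sqrt_nonneg _))

lemma schattenNorm_one_mul_le {d : ℕ} {ι : Type*} [Fintype ι] (C : Matrix (Fin d) ι ℝ)
    (D : Matrix ι (Fin d) ℝ) (p q : ℝ≥0∞) [p.HolderConjugate q] :
    schattenNorm 1 (C * D) ≤
      schattenNorm p (psdSqrt (C * Cᴴ)) * schattenNorm q (psdSqrt (Dᴴ * D)) := by
  obtain ⟨M, hM, hCD⟩ := exists_isDoublySubstochastic_sum_singVals_mul_le C D
  rw [schattenNorm_one_eq_sum_singVals]
  exact hCD.trans (hM.sum_sum_singVals_mul_le_schattenNorm_mul _ _ p q)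

theorem stmt4_general {d n : ℕ} (A B : Fin n → Matrix (Fin d) (Fin d) ℝ)
    (p q : ℝ≥0∞) (hpq : 1 / p + 1 / q = 1) :
    schattenNorm 1 (∑ i, A i * B i) ≤
      schattenNorm p (psdSqrt (∑ i, A i * (A i)ᴴ)) *
        schattenNorm q (psdSqrt (∑ i, (B i)ᴴ * B i)) := by
  have : p.HolderConjugate q := ENNReal.holderConjugate_iff.mpr (by simpa only [one_div] using hpq)
  let C : Matrix (Fin d) (Fin n × Fin d) ℝ := of fun j ik => A ik.1 j ik.2
  let D : Matrix (Fin n × Fin d) (Fin d) ℝ := of fun ik l => B ik.1 ik.2 l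
  have hAB : ∑ i, A i * B i = C * D := by
    ext j l
    simp [C, D, mul_apply, Matrix.sum_apply, Fintype.sum_prod_type]
  have hAA : ∑ i, A i * (A i)ᴴ = C * Cᴴ := by
    ext j l
    simp [C, mul_apply, Matrix.sum_apply, Fintype.sum_prod_type]
  have hBB : ∑ i, (B i)ᴴ * B i = Dᴴ * D := by
    ext j l
    simp [D, mul_apply, Matrix.sum_apply, Fintype.sum_prod_type]
  rw [hAB, hAA, hBB]
  exact schattenNorm_one_mul_le C D p q

/-- for `d×d` matrices `A₁,…,Aₙ, B₁,…,Bₙ` and Hölder conjugate `p, q ∈ [1,∞]`,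
`‖Σ AᵢBᵢ‖_{S¹} ≤ ‖(Σ AᵢAᵢᵀ)^{1/2}‖_{S^p} ⬝ ‖(Σ BᵢᵀBᵢ)^{1/2}‖_{S^q}`. -/
theorem stmt4 {d n : ℕ} (A B : Fin n → Matrix (Fin d) (Fin d) ℝ)
    (p q : ℝ≥0∞) (hp : 1 ≤ p) (hq : 1 ≤ q) (hpq : 1 / p + 1 / q = 1) :
    schattenNorm 1 (∑ i, A i * B i) ≤
      schattenNorm p (psdSqrt (∑ i, A i * (A i)ᴴ)) *
        schattenNorm q (psdSqrt (∑ i, (B i)ᴴ * B i)) :=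
  stmt4_general A B p q hpq
end

section
/- Let A_1, …, A_n and B_1, …, B_n be d×d real symmetric matrices. Then ‖Σ_{i=1}^n A_i B_i‖ ≤ sqrt( ‖Σ_{i=1}^n A_i²‖ · ‖Σ_{i=1}^n B_i²‖ ), where ‖·‖ is the spectral norm. -/
open Matrix

open scoped RealInnerProductSpace

lemma selfAdjoint_of_isSymm {d : ℕ} (A : Matrix (Fin d) (Fin d) ℝ) (h : A.IsSymm) :
    IsSelfAdjoint (toEuclideanCLM (𝕜 := ℝ) A) := by
  have h1 : _root_.IsSelfAdjoint A := by
    show star A = A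
    rw [Matrix.star_eq_conjTranspose, conjTranspose_eq_transpose_of_trivial]
    exact h
  rw [_root_.IsSelfAdjoint, ← map_star]
  exact congrArg _ h1

lemma sum_sq_norm_le {d n : ℕ}
    (T : Fin n → (EuclideanSpace ℝ (Fin d) →L[ℝ] EuclideanSpace ℝ (Fin d)))
    (hT : ∀ i, IsSelfAdjoint (T i)) (x : EuclideanSpace ℝ (Fin d)) :
    ∑ i, ‖T i x‖ ^ 2 ≤ ‖∑ i, T i ^ 2‖ * ‖x‖ ^ 2 := by
  have h1 : ∑ i, ‖T i x‖ ^ 2 = ⟪x, (∑ i, T i ^ 2) x⟫ := by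
    rw [ContinuousLinearMap.sum_apply, inner_sum]
    refine Finset.sum_congr rfl fun i _ => ?_
    have h2 : (T i ^ 2) x =
        (T i : EuclideanSpace ℝ (Fin d) →ₗ[ℝ] EuclideanSpace ℝ (Fin d)) (T i x) := rfl
    rw [h2, ← (hT i).isSymmetric x (T i x)]
    exact (real_inner_self_eq_norm_sq ((T i) x)).symm
  rw [h1]
  calc ⟪x, (∑ i, T i ^ 2) x⟫ ≤ ‖x‖ * ‖(∑ i, T i ^ 2) x‖ := real_inner_le_norm _ _
    _ ≤ ‖x‖ * (‖∑ i, T i ^ 2‖ * ‖x‖) := by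
        gcongr
        exact (∑ i, T i ^ 2).le_opNorm x
    _ = ‖∑ i, T i ^ 2‖ * ‖x‖ ^ 2 := by ring

lemma key_calc {d n : ℕ}
    (T S : Fin n → (EuclideanSpace ℝ (Fin d) →L[ℝ] EuclideanSpace ℝ (Fin d)))
    (hT : ∀ i, IsSelfAdjoint (T i))
    (M : EuclideanSpace ℝ (Fin d) →L[ℝ] EuclideanSpace ℝ (Fin d))
    (a b : ℝ) (ha : 0 ≤ a) (hb : 0 ≤ b) (y : EuclideanSpace ℝ (Fin d))
    (hMyy : M y = ∑ i, T i (S i y))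
    (h1 : ∑ i, ‖T i (M y)‖ ^ 2 ≤ a * ‖M y‖ ^ 2)
    (h2 : ∑ i, ‖S i y‖ ^ 2 ≤ b * ‖y‖ ^ 2) :
    ‖M y‖ ^ 2 ≤ (Real.sqrt a * ‖M y‖) * (Real.sqrt b * ‖y‖) := by
  calc ‖M y‖ ^ 2 = ⟪M y, M y⟫ := (real_inner_self_eq_norm_sq _).symm
    _ = ∑ i, ⟪T i (M y), S i y⟫ := by
        nth_rewrite 2 [hMyy]
        rw [inner_sum]
        exact Finset.sum_congr rfl fun i _ => ((hT i).isSymmetric _ _).symm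
    _ ≤ ∑ i, ‖T i (M y)‖ * ‖S i y‖ :=
        Finset.sum_le_sum fun i _ => real_inner_le_norm _ _
    _ ≤ Real.sqrt ((∑ i, ‖T i (M y)‖ ^ 2) * (∑ i, ‖S i y‖ ^ 2)) :=
        Real.le_sqrt_of_sq_le (Finset.sum_mul_sq_le_sq_mul_sq _ _ _)
    _ ≤ Real.sqrt ((a * ‖M y‖ ^ 2) * (b * ‖y‖ ^ 2)) := by
        apply Real.sqrt_le_sqrt
        have hnn : (0:ℝ) ≤ ∑ i, ‖S i y‖ ^ 2 := by positivity
        calc (∑ i, ‖T i (M y)‖ ^ 2) * (∑ i, ‖S i y‖ ^ 2)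
            ≤ (a * ‖M y‖ ^ 2) * (∑ i, ‖S i y‖ ^ 2) := mul_le_mul_of_nonneg_right h1 hnn
          _ ≤ (a * ‖M y‖ ^ 2) * (b * ‖y‖ ^ 2) := mul_le_mul_of_nonneg_left h2 (by positivity)
    _ = (Real.sqrt a * ‖M y‖) * (Real.sqrt b * ‖y‖) := by
        rw [show a * ‖M y‖ ^ 2 * (b * ‖y‖ ^ 2) = (a * b) * (‖M y‖ * ‖y‖) ^ 2 by ring,
          Real.sqrt_mul (mul_nonneg ha hb), Real.sqrt_sq (by positivity),
          Real.sqrt_mul ha]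
        ring

lemma clm_cauchy_schwarz {d n : ℕ}
    (T S : Fin n → (EuclideanSpace ℝ (Fin d) →L[ℝ] EuclideanSpace ℝ (Fin d)))
    (hT : ∀ i, IsSelfAdjoint (T i)) (hS : ∀ i, IsSelfAdjoint (S i)) :
    ‖∑ i, T i * S i‖ ≤ Real.sqrt (‖∑ i, T i ^ 2‖ * ‖∑ i, S i ^ 2‖) := by
  have ha : (0:ℝ) ≤ ‖∑ i, T i ^ 2‖ := norm_nonneg _
  have hb : (0:ℝ) ≤ ‖∑ i, S i ^ 2‖ := norm_nonneg _
  refine ContinuousLinearMap.opNorm_le_bound _ (Real.sqrt_nonneg _) fun y => ?_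
  set M : EuclideanSpace ℝ (Fin d) →L[ℝ] EuclideanSpace ℝ (Fin d) := ∑ i, T i * S i with hMdef
  by_cases h0 : ‖M y‖ = 0
  · rw [h0]
    positivity
  have hMy : 0 < ‖M y‖ := lt_of_le_of_ne (norm_nonneg _) (Ne.symm h0)
  have hMyy : M y = ∑ i, T i (S i y) := by
    rw [hMdef, ContinuousLinearMap.sum_apply]
    exact Finset.sum_congr rfl fun i _ => rfl
  have key := key_calc T S hT M _ _ ha hb y hMyy
    (sum_sq_norm_le T hT (M y)) (sum_sq_norm_le S hS y)
  have hfin : ‖M y‖ ≤ Real.sqrt ‖∑ i, T i ^ 2‖ * Real.sqrt ‖∑ i, S i ^ 2‖ * ‖y‖ := by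
    nlinarith [Real.sqrt_nonneg ‖∑ i, T i ^ 2‖, Real.sqrt_nonneg ‖∑ i, S i ^ 2‖,
      norm_nonneg y, hMy]
  rw [Real.sqrt_mul ha]
  linarith

/-- for symmetric matrices `A₁,…,Aₙ, B₁,…,Bₙ`,
`‖Σ Aᵢ Bᵢ‖ ≤ sqrt(‖Σ Aᵢ²‖ ⬝ ‖Σ Bᵢ²‖)` in spectral norm. -/
theorem stmt7 {d n : ℕ} (A B : Fin n → Matrix (Fin d) (Fin d) ℝ)
    (hA : ∀ i, (A i).IsSymm) (hB : ∀ i, (B i).IsSymm) :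
    specNorm (∑ i, A i * B i) ≤
      Real.sqrt (specNorm (∑ i, (A i) ^ 2) * specNorm (∑ i, (B i) ^ 2)) := by
  have hM : toEuclideanCLM (𝕜 := ℝ) (∑ i, A i * B i) =
      ∑ i, toEuclideanCLM (𝕜 := ℝ) (A i) * toEuclideanCLM (𝕜 := ℝ) (B i) := by
    simp [map_sum]
  have hPA : toEuclideanCLM (𝕜 := ℝ) (∑ i, (A i) ^ 2) =
      ∑ i, toEuclideanCLM (𝕜 := ℝ) (A i) ^ 2 := by
    simp [map_sum]
  have hPB : toEuclideanCLM (𝕜 := ℝ) (∑ i, (B i) ^ 2) =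
      ∑ i, toEuclideanCLM (𝕜 := ℝ) (B i) ^ 2 := by
    simp [map_sum]
  rw [specNorm, specNorm, specNorm, hM, hPA, hPB]
  exact clm_cauchy_schwarz _ _ (fun i => selfAdjoint_of_isSymm _ (hA i))
    (fun i => selfAdjoint_of_isSymm _ (hB i))
end

section
/- Let A_1, …, A_n be d×d real positive semidefinite matrices. Then ‖Σ_{i=1}^n A_i²‖ ≤ (max_{1≤i≤n} ‖A_i‖) · ‖Σ_{i=1}^n A_i‖, where ‖·‖ is the spectral norm. -/
/-!
Let `T` be a positive operator with `‖T‖ ≤ c`, so that `D = c - T` is positive too. The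
conjugates `D T D` and `T D T` are positive and add up to `c (c T - T²)`, hence `T² ≤ c T` in
the Loewner order. Summing over `i` with `c = maxᵢ ‖Aᵢ‖` gives `∑ Aᵢ² ≤ c ∑ Aᵢ`, and the norm is
monotone on positive operators because it is the supremum of the Rayleigh quotient.
-/

open Matrix

open scoped InnerProductSpace ComplexOrder

namespace ContinuousLinearMap

variable {𝕜 E : Type*} [RCLike 𝕜] [NormedAddCommGroup E] [InnerProductSpace 𝕜 E]

lemma IsPositive.norm_le_norm_of_le {S R : E →L[𝕜] E} (hS : S.IsPositive) (hSR : S ≤ R) :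
    ‖S‖ ≤ ‖R‖ := by
  rw [S.norm_eq_iSup_rayleighQuotient hS.isSymmetric]
  refine ciSup_le fun x => ?_
  have hR : R.rayleighQuotient x = S.rayleighQuotient x + (R - S).rayleighQuotient x := by
    rw [← rayleighQuotient_add, add_sub_cancel]
  calc |S.rayleighQuotient x| = S.rayleighQuotient x :=
        abs_of_nonneg (div_nonneg (hS.2 x) (by positivity))
    _ ≤ R.rayleighQuotient x := by
        rw [hR]
        exact le_add_of_nonneg_right (div_nonneg (hSR.2 x) (by positivity))
    _ ≤ |R.rayleighQuotient x| := le_abs_self _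
    _ ≤ ‖R‖ := R.rayleighQuotient_le_norm x

lemma le_smul_one_of_norm_le {T : E →L[𝕜] E} (hT : T.IsSymmetric) {c : ℝ} (hc : ‖T‖ ≤ c) :
    T ≤ (c : 𝕜) • 1 := by
  rw [le_def]
  refine ⟨?_, fun x => ?_⟩
  · simpa using (LinearMap.IsSymmetric.one.smul (RCLike.conj_ofReal c)).sub hT
  · have hTx : RCLike.re ⟪T x, x⟫_𝕜 ≤ c * ‖x‖ ^ 2 :=
      calc RCLike.re ⟪T x, x⟫_𝕜 ≤ ‖T x‖ * ‖x‖ := re_inner_le_norm _ _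
        _ ≤ c * ‖x‖ * ‖x‖ := by gcongr; exact T.le_of_opNorm_le hc x
        _ = c * ‖x‖ ^ 2 := by ring
    simpa [reApplyInnerSelf, inner_sub_left, inner_smul_left, inner_self_eq_norm_sq] using hTx

lemma IsPositive.sq_le_smul_of_norm_le [CompleteSpace E] {T : E →L[𝕜] E} (hT : T.IsPositive)
    {c : ℝ} (hc : ‖T‖ ≤ c) : T ^ 2 ≤ (c : 𝕜) • T := by
  rcases (norm_nonneg T).trans hc |>.eq_or_lt with hc₀ | hc₀
  · obtain rfl : T = 0 := norm_le_zero_iff.mp (hc₀ ▸ hc)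
    simp
  set D := (c : 𝕜) • 1 - T
  have hD : D.IsPositive := le_smul_one_of_norm_le hT.isSymmetric hc
  have hsum : D ∘L T ∘L adjoint D + T ∘L D ∘L adjoint T = (c : 𝕜) • ((c : 𝕜) • T - T ^ 2) := by
    rw [hD.isSelfAdjoint.adjoint_eq, hT.isSelfAdjoint.adjoint_eq]
    ext x
    simp [D, pow_two]
  have hpos := (hT.conj_adjoint D).add (hD.conj_adjoint T)
  rw [hsum] at hpos
  have hc_inv : (0 : 𝕜) ≤ ((c⁻¹ : ℝ) : 𝕜) := RCLike.ofReal_nonneg.mpr (inv_nonneg.mpr hc₀.le)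
  simpa [le_def, smul_smul, ← RCLike.ofReal_mul, hc₀.ne'] using hpos.smul_of_nonneg hc_inv

lemma norm_sum_sq_le_mul_norm_sum [CompleteSpace E] {ι : Type*} (s : Finset ι)
    {T : ι → E →L[𝕜] E} (hT : ∀ i ∈ s, (T i).IsPositive) {M : ℝ} (hM₀ : 0 ≤ M)
    (hM : ∀ i ∈ s, ‖T i‖ ≤ M) :
    ‖∑ i ∈ s, T i ^ 2‖ ≤ M * ‖∑ i ∈ s, T i‖ := by
  have hsq : (∑ i ∈ s, T i ^ 2).IsPositive := isPositive_sum s fun i hi => by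
    simpa [(hT i hi).isSelfAdjoint.adjoint_eq, pow_two, mul_def] using
      isPositive_adjoint_comp_self (T i)
  have hle : ∑ i ∈ s, T i ^ 2 ≤ (M : 𝕜) • ∑ i ∈ s, T i := by
    rw [le_def, Finset.smul_sum, ← Finset.sum_sub_distrib]
    exact isPositive_sum s fun i hi => (hT i hi).sq_le_smul_of_norm_le (hM i hi)
  calc ‖∑ i ∈ s, T i ^ 2‖ ≤ ‖(M : 𝕜) • ∑ i ∈ s, T i‖ := hsq.norm_le_norm_of_le hle
    _ = M * ‖∑ i ∈ s, T i‖ := by rw [norm_smul, RCLike.norm_ofReal, abs_of_nonneg hM₀]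

end ContinuousLinearMap

lemma Matrix.PosSemidef.isPositive_toEuclideanCLM {𝕜 n : Type*} [RCLike 𝕜] [Fintype n]
    [DecidableEq n] {A : Matrix n n 𝕜} (hA : A.PosSemidef) :
    (toEuclideanCLM (𝕜 := 𝕜) A).IsPositive := by
  rw [← ContinuousLinearMap.isPositive_toLinearMap_iff, coe_toEuclideanCLM_eq_toEuclideanLin]
  exact isPositive_toEuclideanLin_iff.mpr hA

theorem stmt8_general {d n : ℕ} (A : Fin n → Matrix (Fin d) (Fin d) ℝ)
    (hA : ∀ i, (A i).PosSemidef) :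
    specNorm (∑ i, (A i) ^ 2) ≤ (⨆ i, specNorm (A i)) * specNorm (∑ i, A i) := by
  have hM : ∀ i, specNorm (A i) ≤ ⨆ i, specNorm (A i) := le_ciSup (Set.finite_range _).bddAbove
  have hM₀ : 0 ≤ ⨆ i, specNorm (A i) := Real.iSup_nonneg fun i => norm_nonneg _
  simpa [specNorm, map_sum, map_pow] using
    ContinuousLinearMap.norm_sum_sq_le_mul_norm_sum Finset.univ
      (fun i _ => (hA i).isPositive_toEuclideanCLM) hM₀ (fun i _ => hM i)

/-- for positive semidefinite matrices `A₁,…,Aₙ`,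
`‖Σ Aᵢ²‖ ≤ (max_i ‖Aᵢ‖) ⬝ ‖Σ Aᵢ‖` in spectral norm. -/
theorem stmt8 {d n : ℕ} (hn : 0 < n) (A : Fin n → Matrix (Fin d) (Fin d) ℝ)
    (hA : ∀ i, (A i).PosSemidef) :
    specNorm (∑ i, (A i) ^ 2) ≤ (⨆ i, specNorm (A i)) * specNorm (∑ i, A i) :=
  stmt8_general A hA
end
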